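/- Let f be a Boolean function on k+1 variables that depends on all of them and let Ψ = f(H_{k0},…,H_{kk}). If Φ = Ψ[θ] for a partial assignment θ having at least 4 pairwise independent transversals, then the set of H_k-units of Φ equals the union over 0 ≤ ℓ ≤ k of the sets of units of H_{kℓ}[θ], i.e. U_k(Φ) = ⋃_{ℓ=0}^{k} U(H_{kℓ}[θ]). -/

import Mathlib

/-! ### Basic notions on Boolean functions -/

namespace BF

variable {V : Type}

/-- Restriction `Φ[θ]` of a Boolean function `Φ` by a partial assignment `θ`. -/
def restrict (Φ : (V → Bool) → Bool) (θ : V → Option Bool) : (V → Bool) → Bool :=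
  fun a => Φ (fun v => (θ v).getD (a v))

/-- Combination `θ ∪ μ` of two partial assignments, where `θ` takes priority. -/
def combine (θ μ : V → Option Bool) : V → Option Bool :=
  fun v => (θ v).elim (μ v) some

/-- The partial assignment setting the single variable `X` to `b`. -/
def single [DecidableEq V] (X : V) (b : Bool) : V → Option Bool :=
  fun v => if v = X then some b else none

/-- A term (conjunction of literals, given as a partial assignment) implies `Φ`. -/
def TermImplies (τ : V → Option Bool) (Φ : (V → Bool) → Bool) : Prop :=
  ∀ a : V → Bool, (∀ v b, τ v = some b → a v = b) → Φ a = true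

/-- `τ'` is a subterm (subconjunction) of `τ`. -/
def Subterm (τ' τ : V → Option Bool) : Prop :=
  ∀ v b, τ' v = some b → τ v = some b

/-- `τ` is a prime implicant of `Φ`: it implies `Φ`, and no proper subconjunction does. -/
def IsPrimeImplicant (τ : V → Option Bool) (Φ : (V → Bool) → Bool) : Prop :=
  TermImplies τ Φ ∧ ∀ τ', Subterm τ' τ → τ' ≠ τ → ¬ TermImplies τ' Φ

/-- The variable `X` is a unit of `Φ`: by itself (positively) a prime implicant of `Φ`. -/
def IsUnit [DecidableEq V] (X : V) (Φ : (V → Bool) → Bool) : Prop :=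
  IsPrimeImplicant (single X true) Φ

/-- `Φ` depends on the variable `v`. -/
def DependsOnVar [DecidableEq V] (Φ : (V → Bool) → Bool) (v : V) : Prop :=
  ∃ a : V → Bool, Φ (Function.update a v true) ≠ Φ (Function.update a v false)

/-- The set of units of `Φ`. -/
def unitSet [DecidableEq V] (Φ : (V → Bool) → Bool) : Set V :=
  {X | IsUnit X Φ}

/-- The degree of a variable `X` in `Φ`: the maximum over partial assignments `θ`
(not assigning `X`) of the number of units of `Φ[θ ∪ {X=1}]` that are not units of
`Φ[θ]`. -/
noncomputable def degreeOf [Fintype V] [DecidableEq V] (Φ : (V → Bool) → Bool) (X : V) : ℕ :=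
  sSup { m | ∃ θ : V → Option Bool, θ X = none ∧
    m = (unitSet (restrict Φ (combine (single X true) θ)) \ unitSet (restrict Φ θ)).ncard }

/-- `Δ(Φ)`: the maximum degree of any variable of `Φ`. -/
noncomputable def maxDegree [Fintype V] [DecidableEq V] (Φ : (V → Bool) → Bool) : ℕ :=
  Finset.univ.sup (fun X => degreeOf Φ X)

end BF

/-! ### FBDDs (free binary decision diagrams), possibly multi-output -/

/-- A node of a (multi-output) FBDD: a sink labeled by an output value, or a decision
node labeled by a variable with a 0-edge and a 1-edge (children are given as indices,
which are required to be smaller, guaranteeing acyclicity). -/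
inductive BddNode (V O : Type) where
  | sink (o : O)
  | decision (x : V) (lo hi : ℕ)

/-- A (multi-output) FBDD structure: a rooted DAG with nodes `0, …, size-1`, in
topological order (edges decrease the index).  Freeness (read-once) is the
predicate `FBDD.ReadOnce` below. -/
structure FBDD (V O : Type) where
  size : ℕ
  node : Fin size → BddNode V O
  root : Fin size
  dec : ∀ (i : Fin size) (x : V) (lo hi : ℕ),
      node i = .decision x lo hi → lo < i.1 ∧ hi < i.1

namespace FBDD

variable {V O : Type}

/-- The output computed at node `i` on the total assignment `a`. -/
def evalAt (F : FBDD V O) (a : V → Bool) (i : Fin F.size) : O :=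
  match h : F.node i with
  | .sink o => o
  | .decision x lo hi =>
      have hd := F.dec i x lo hi h
      if a x then F.evalAt a ⟨hi, hd.2.trans i.isLt⟩
      else F.evalAt a ⟨lo, hd.1.trans i.isLt⟩
termination_by i.1
decreasing_by
  · exact hd.2
  · exact hd.1

/-- The output of the FBDD on a total assignment. -/
def eval (F : FBDD V O) (a : V → Bool) : O := F.evalAt a F.root

/-- Edge relation of the underlying DAG. -/
def edge (F : FBDD V O) (i j : Fin F.size) : Prop :=
  ∃ x lo hi, F.node i = .decision x lo hi ∧ (j.1 = lo ∨ j.1 = hi)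

/-- Reachability in the underlying DAG. -/
def reach (F : FBDD V O) : Fin F.size → Fin F.size → Prop :=
  Relation.ReflTransGen F.edge

/-- Node `i` tests the variable `x`. -/
def tests (F : FBDD V O) (i : Fin F.size) (x : V) : Prop :=
  ∃ lo hi, F.node i = .decision x lo hi

/-- The FBDD is free (read-once): along every path from the root, each variable is
tested at most once. -/
def ReadOnce (F : FBDD V O) : Prop :=
  ∀ i c j x, F.reach F.root i → F.tests i x → F.edge i c → F.reach c j →
    ¬ F.tests j x

/-- A single-output FBDD computes the Boolean function `Φ`. -/
def Computes (F : FBDD V Bool) (Φ : (V → Bool) → Bool) : Prop :=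
  ∀ a, F.eval a = Φ a

/-- A multi-output FBDD simultaneously computes the `m` Boolean functions `Φ`. -/
def ComputesAll {m : ℕ} (F : FBDD V (Fin m → Bool)) (Φ : Fin m → (V → Bool) → Bool) : Prop :=
  ∀ a l, F.eval a l = Φ l a

/-- The Boolean function computed by the sub-DAG rooted at node `u`. -/
def funAt (F : FBDD V Bool) (u : Fin F.size) : (V → Bool) → Bool :=
  fun a => F.evalAt a u

/-- The FBDD follows the unit rule: at every (reachable) node `u` whose function has a
unit, the variable tested at `u` is a unit of that function. -/
def FollowsUnitRule [DecidableEq V] (F : FBDD V Bool) : Prop :=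
  ∀ u : Fin F.size, F.reach F.root u → (∃ X, BF.IsUnit X (F.funAt u)) →
    ∀ x, F.tests u x → BF.IsUnit x (F.funAt u)

end FBDD

/-! ### DLDDs (decomposable logic decision diagrams) -/

/-- A node of a DLDD: a sink, a decision node, a NOT-node, or a binary
AND/OR/XOR/EQUIV gate (children given as smaller indices). -/
inductive DlddNode (V : Type) where
  | sink (b : Bool)
  | decision (x : V) (lo hi : ℕ)
  | not (c : ℕ)
  | and (c1 c2 : ℕ)
  | or (c1 c2 : ℕ)
  | xor (c1 c2 : ℕ)
  | equiv (c1 c2 : ℕ)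

/-- The children of a DLDD node. -/
def DlddNode.children {V : Type} : DlddNode V → List ℕ
  | .sink _ => []
  | .decision _ lo hi => [lo, hi]
  | .not c => [c]
  | .and c1 c2 => [c1, c2]
  | .or c1 c2 => [c1, c2]
  | .xor c1 c2 => [c1, c2]
  | .equiv c1 c2 => [c1, c2]

/-- The children of a DLDD node, if it is a binary gate. -/
def DlddNode.gateChildren {V : Type} : DlddNode V → Option (ℕ × ℕ)
  | .and c1 c2 => some (c1, c2)
  | .or c1 c2 => some (c1, c2)
  | .xor c1 c2 => some (c1, c2)
  | .equiv c1 c2 => some (c1, c2)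
  | _ => none

/-- A DLDD structure: a rooted DAG with nodes `0, …, size-1` in topological order.
Freeness and decomposability are the predicates `DLDD.ReadOnce` and
`DLDD.Decomposable` below. -/
structure DLDD (V : Type) where
  size : ℕ
  node : Fin size → DlddNode V
  root : Fin size
  dec : ∀ (i : Fin size), ∀ c ∈ (node i).children, c < i.1

namespace DLDD

variable {V : Type}

/-- The Boolean value computed at node `i` on a total assignment `a`. -/
def evalAt (D : DLDD V) (a : V → Bool) (i : Fin D.size) : Bool :=
  match h : D.node i with
  | .sink b => b
  | .decision x lo hi =>
      have hlo : lo < i.1 := D.dec i lo (by rw [h]; simp [DlddNode.children])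
      have hhi : hi < i.1 := D.dec i hi (by rw [h]; simp [DlddNode.children])
      if a x then D.evalAt a ⟨hi, hhi.trans i.isLt⟩
      else D.evalAt a ⟨lo, hlo.trans i.isLt⟩
  | .not c =>
      have hc : c < i.1 := D.dec i c (by rw [h]; simp [DlddNode.children])
      ! D.evalAt a ⟨c, hc.trans i.isLt⟩
  | .and c1 c2 =>
      have h1 : c1 < i.1 := D.dec i c1 (by rw [h]; simp [DlddNode.children])
      have h2 : c2 < i.1 := D.dec i c2 (by rw [h]; simp [DlddNode.children])
      D.evalAt a ⟨c1, h1.trans i.isLt⟩ && D.evalAt a ⟨c2, h2.trans i.isLt⟩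
  | .or c1 c2 =>
      have h1 : c1 < i.1 := D.dec i c1 (by rw [h]; simp [DlddNode.children])
      have h2 : c2 < i.1 := D.dec i c2 (by rw [h]; simp [DlddNode.children])
      D.evalAt a ⟨c1, h1.trans i.isLt⟩ || D.evalAt a ⟨c2, h2.trans i.isLt⟩
  | .xor c1 c2 =>
      have h1 : c1 < i.1 := D.dec i c1 (by rw [h]; simp [DlddNode.children])
      have h2 : c2 < i.1 := D.dec i c2 (by rw [h]; simp [DlddNode.children])
      Bool.xor (D.evalAt a ⟨c1, h1.trans i.isLt⟩) (D.evalAt a ⟨c2, h2.trans i.isLt⟩)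
  | .equiv c1 c2 =>
      have h1 : c1 < i.1 := D.dec i c1 (by rw [h]; simp [DlddNode.children])
      have h2 : c2 < i.1 := D.dec i c2 (by rw [h]; simp [DlddNode.children])
      D.evalAt a ⟨c1, h1.trans i.isLt⟩ == D.evalAt a ⟨c2, h2.trans i.isLt⟩
termination_by i.1
decreasing_by
  · exact hhi
  · exact hlo
  · exact hc
  · exact h1
  · exact h2
  · exact h1
  · exact h2
  · exact h1
  · exact h2
  · exact h1
  · exact h2

/-- The Boolean value computed by the DLDD. -/
def eval (D : DLDD V) (a : V → Bool) : Bool := D.evalAt a D.root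

/-- Edge relation of the underlying DAG. -/
def edge (D : DLDD V) (i j : Fin D.size) : Prop := j.1 ∈ (D.node i).children

/-- Reachability in the underlying DAG. -/
def reach (D : DLDD V) : Fin D.size → Fin D.size → Prop :=
  Relation.ReflTransGen D.edge

/-- Node `i` is a decision node testing the variable `x`. -/
def tests (D : DLDD V) (i : Fin D.size) (x : V) : Prop :=
  ∃ lo hi, D.node i = .decision x lo hi

/-- Along every path from the root, each variable is tested at most once. -/
def ReadOnce (D : DLDD V) : Prop :=
  ∀ i c j x, D.reach D.root i → D.tests i x → D.edge i c → D.reach c j →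
    ¬ D.tests j x

/-- The variable `x` is mentioned in the sub-DAG rooted at `i`. -/
def mentions (D : DLDD V) (i : Fin D.size) (x : V) : Prop :=
  ∃ j, D.reach i j ∧ D.tests j x

/-- Decomposability: the two children's sub-DAGs of any (reachable) binary gate node
mention no common variable. -/
def Decomposable (D : DLDD V) : Prop :=
  ∀ (i : Fin D.size) (c1 c2 : ℕ), D.reach D.root i →
    (D.node i).gateChildren = some (c1, c2) →
    ∀ (h1 : c1 < D.size) (h2 : c2 < D.size) (x : V),
      ¬ (D.mentions ⟨c1, h1⟩ x ∧ D.mentions ⟨c2, h2⟩ x)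

/-- The DLDD computes the Boolean function `Φ`. -/
def Computes (D : DLDD V) (Φ : (V → Bool) → Bool) : Prop :=
  ∀ a, D.eval a = Φ a

end DLDD

/-! ### The queries `h_{kℓ}` and their lineages `H_{kℓ}` -/

/-- The Boolean variables `R(i)`, `S_ℓ(i,j)` (for `1 ≤ ℓ ≤ k`, encoded by `Fin k`),
and `T(j)`, for `i, j ∈ [n]`. -/
inductive HVar (n k : ℕ) where
  | R (i : Fin n)
  | S (l : Fin k) (i j : Fin n)
  | T (j : Fin n)
deriving DecidableEq

/-- The first variable of the prime implicant `P_{ℓ,i,j}`: `R(i)` if `ℓ = 0`,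
otherwise `S_ℓ(i,j)`. -/
def leftVar (n k : ℕ) (l : Fin (k+1)) (i j : Fin n) : HVar n k :=
  if h : l.1 = 0 then .R i else .S ⟨l.1 - 1, by have := l.isLt; omega⟩ i j

/-- The second variable of the prime implicant `P_{ℓ,i,j}`: `T(j)` if `ℓ = k`,
otherwise `S_{ℓ+1}(i,j)`. -/
def rightVar (n k : ℕ) (l : Fin (k+1)) (i j : Fin n) : HVar n k :=
  if h : l.1 = k then .T j else .S ⟨l.1, by have := l.isLt; omega⟩ i j

/-- The conjunction `P_{ℓ,i,j}` as a Boolean function. -/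
def Pfun (n k : ℕ) (l : Fin (k+1)) (i j : Fin n) : (HVar n k → Bool) → Bool :=
  fun a => a (leftVar n k l i j) && a (rightVar n k l i j)

/-- The conjunction `P_{ℓ,i,j}` as a term (partial assignment). -/
def Pterm (n k : ℕ) (l : Fin (k+1)) (i j : Fin n) : HVar n k → Option Bool :=
  fun v => if v = leftVar n k l i j ∨ v = rightVar n k l i j then some true else none

/-- The lineage `H_{kℓ} = ⋁_{i,j∈[n]} P_{ℓ,i,j}`. -/
def Hfun (n k : ℕ) (l : Fin (k+1)) : (HVar n k → Bool) → Bool :=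
  fun a => decide (∃ i j : Fin n, Pfun n k l i j a = true)

/-- The lineage `H_k = H_{k0} ∨ H_{k1} ∨ ⋯ ∨ H_{kk}`. -/
def HkFun (n k : ℕ) : (HVar n k → Bool) → Bool :=
  fun a => decide (∃ l : Fin (k+1), Hfun n k l a = true)

/-- The lineages `B_0 = ⋁_i R(i)`, `B_ℓ = ⋁_{i,j} S_ℓ(i,j)` for `1 ≤ ℓ ≤ k`, and
`B_{k+1} = ⋁_j T(j)`. -/
def Bfun (n k : ℕ) (l : Fin (k+2)) : (HVar n k → Bool) → Bool :=
  fun a => decide (∃ i j : Fin n,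
    (if _ : l.1 = 0 then a (.R i)
     else if _ : l.1 = k + 1 then a (.T j)
     else a (.S ⟨l.1 - 1, by have := l.isLt; omega⟩ i j)) = true)

/-- A Boolean function `f` on `m` variables depends on its `l`-th variable: some
assignment `μ` to the remaining variables restricts `f` to `X_l` or `¬X_l`. -/
def BoolFunDependsOn {m : ℕ} (f : (Fin m → Bool) → Bool) (l : Fin m) : Prop :=
  ∃ μ : Fin m → Bool,
    (∀ b, f (Function.update μ l b) = b) ∨ (∀ b, f (Function.update μ l b) = !b)

/-- The lineage `Ψ = f(H_{k0}, …, H_{kk})`. -/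
def Psi (n k : ℕ) (f : (Fin (k+1) → Bool) → Bool) : (HVar n k → Bool) → Bool :=
  fun a => f (fun l => Hfun n k l a)

/-- `(i,j)` is a transversal of the partial assignment `θ`: for every `0 ≤ ℓ ≤ k`,
`P_{ℓ,i,j}` is a prime implicant of `H_{kℓ}[θ]`. -/
def Transversal (n k : ℕ) (θ : HVar n k → Option Bool) (p : Fin n × Fin n) : Prop :=
  ∀ l : Fin (k+1), BF.IsPrimeImplicant (Pterm n k l p.1 p.2) (BF.restrict (Hfun n k l) θ)

/-- Two pairs of indices are independent: they differ in both coordinates. -/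
def IndepPairs {n : ℕ} (p q : Fin n × Fin n) : Prop := p.1 ≠ q.1 ∧ p.2 ≠ q.2

/-- `θ` has (at least) `m` pairwise independent transversals. -/
def HasIndepTransversals (n k : ℕ) (θ : HVar n k → Option Bool) (m : ℕ) : Prop :=
  ∃ S : Finset (Fin n × Fin n), m ≤ S.card ∧ (∀ p ∈ S, Transversal n k θ p) ∧
    (S : Set (Fin n × Fin n)).Pairwise IndepPairs

/-- The maximum number of pairwise independent transversals of `θ`. -/
noncomputable def maxIndepTransversals (n k : ℕ) (θ : HVar n k → Option Bool) : ℕ :=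
  sSup { m | ∃ S : Finset (Fin n × Fin n), S.card = m ∧ (∀ p ∈ S, Transversal n k θ p) ∧
    (S : Set (Fin n × Fin n)).Pairwise IndepPairs }

/-- A restriction `Φ` of `Ψ = f(H_{k0},…,H_{kk})` is transversal-free: some `θ` with
`Ψ[θ] = Φ` has no transversals. -/
def TransversalFree (n k : ℕ) (f : (Fin (k+1) → Bool) → Bool)
    (Φ : (HVar n k → Bool) → Bool) : Prop :=
  ∃ θ : HVar n k → Option Bool, BF.restrict (Psi n k f) θ = Φ ∧
    ∀ p : Fin n × Fin n, ¬ Transversal n k θ p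

/-- `Z` is an `H_k`-unit of the restriction `Φ` of `Ψ`: `Φ[Z=1]` is transversal-free
but `Φ` is not. -/
def IsHkUnit (n k : ℕ) (f : (Fin (k+1) → Bool) → Bool) (Z : HVar n k)
    (Φ : (HVar n k → Bool) → Bool) : Prop :=
  TransversalFree n k f (BF.restrict Φ (BF.single Z true)) ∧ ¬ TransversalFree n k f Φ

/-- A restriction `Φ` of `Ψ` is transparent: the residual lineages `H_{kℓ}[θ]` are
the same for every `θ` with `Ψ[θ] = Φ`. -/
def Transparent (n k : ℕ) (f : (Fin (k+1) → Bool) → Bool)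
    (Φ : (HVar n k → Bool) → Bool) : Prop :=
  ∃ φ : Fin (k+1) → ((HVar n k → Bool) → Bool),
    ∀ θ : HVar n k → Option Bool, BF.restrict (Psi n k f) θ = Φ →
      ∀ l, BF.restrict (Hfun n k l) θ = φ l

/-- The Boolean variables of the query `h_0`. -/
inductive H0Var (n : ℕ) where
  | R (i : Fin n)
  | S (i j : Fin n)
  | T (j : Fin n)
deriving DecidableEq

/-- The lineage `H_0 = ⋁_{i,j∈[n]} R(i) ∧ S(i,j) ∧ T(j)`. -/
def H0Fun (n : ℕ) : (H0Var n → Bool) → Bool :=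
  fun a => decide (∃ i j : Fin n, (a (.R i) && a (.S i j) && a (.T j)) = true)

/-!
A pair `(i,j)` is a transversal of `σ` exactly when no `H_{kℓ}[σ]` is constantly true, the
chain `R(i), S_1(i,j), …, S_k(i,j), T(j)` is unassigned, and `σ` makes neither `R(i)` a unit of
`H_{k0}[σ]` nor `T(j)` a unit of `H_{kk}[σ]`.

The heart of the proof is a rigidity statement: if `σ` has three independent transversals (two
when `k = 1`), every `σ''` with `Ψ[σ''] = Ψ[σ]` has a transversal. Setting positions on the free
chains of the other transversals realizes any vector of values of `H_{k0}, …, H_{kk}` under `σ`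
(two chains suffice), so, `f` depending on all its arguments, `σ''` can neither assign a chain
variable, nor make some `H_{kℓ}[σ'']` constantly true, nor create a unit `R(i)` or `T(j)`: each
would make `Ψ[σ'']` and `Ψ[σ]` differ on such an assignment.

If `Z` is a unit of some `H_{kℓ}[θ]`, then `H_{kℓ}[θ][Z=1] ≡ 1` and `Φ[Z=1]` has no transversal.
Otherwise setting `Z` destroys at most one of four independent transversals (two when `k = 1`),
so by rigidity `Φ[Z=1]` is not transversal-free.
-/

namespace BF

variable {V : Type}

theorem restrict_restrict (Φ : (V → Bool) → Bool) (θ τ : V → Option Bool) :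
    restrict (restrict Φ θ) τ = restrict Φ (combine θ τ) := by
  funext a
  simp only [restrict, combine]
  congr 1
  funext v
  cases θ v <;> rfl

theorem restrict_congr {Φ : (V → Bool) → Bool} {σ : V → Option Bool} {a a' : V → Bool}
    (h : ∀ v, σ v = none → a v = a' v) : restrict Φ σ a = restrict Φ σ a' := by
  unfold restrict
  congr 1
  funext v
  cases hv : σ v
  · exact h v hv
  · rfl

theorem monotone_restrict {Φ : (V → Bool) → Bool} (hΦ : Monotone Φ) (σ : V → Option Bool) :
    Monotone (restrict Φ σ) := by
  intro a b hab
  apply hΦ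
  intro v
  show (σ v).getD (a v) ≤ (σ v).getD (b v)
  cases σ v
  · exact hab v
  · exact le_rfl

theorem TermImplies.mono {τ τ' : V → Option Bool} {Φ : (V → Bool) → Bool}
    (h : Subterm τ' τ) (ht : TermImplies τ' Φ) : TermImplies τ Φ :=
  fun a ha => ht a fun v b hv => ha v b (h v b hv)

theorem termImplies_iff_of_monotone {τ : V → Option Bool} {Φ : (V → Bool) → Bool}
    (hΦ : Monotone Φ) (hτ : ∀ v b, τ v = some b → b = true) :
    TermImplies τ Φ ↔ Φ (fun v => decide (τ v = some true)) = true := by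
  refine ⟨fun h => h _ fun v b hv => ?_, fun h a ha => ?_⟩
  · obtain rfl := hτ v b hv
    simp [hv]
  · refine Bool.le_iff_imp.1 (hΦ fun v => Bool.le_iff_imp.2 fun hv => ?_) h
    exact ha v true (of_decide_eq_true hv)

theorem termImplies_none_restrict_iff {Φ : (V → Bool) → Bool} {τ : V → Option Bool} :
    TermImplies (fun _ => none) (restrict Φ τ) ↔ TermImplies τ Φ := by
  refine ⟨fun h a ha => ?_, fun h a _ => h _ fun v b hv => by simp [hv]⟩
  have hfix : (fun v => (τ v).getD (a v)) = a := by
    funext v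
    cases hv : τ v
    · rfl
    · exact (ha v _ hv).symm
  simpa [restrict, hfix] using h a (by simp)

theorem combine_single_eq_none [DecidableEq V] {θ : V → Option Bool} {Z v : V} {b : Bool} :
    combine θ (single Z b) v = none ↔ θ v = none ∧ v ≠ Z := by
  unfold combine single
  cases θ v <;> by_cases hv : v = Z <;> simp [hv]

theorem combine_single_eq_some [DecidableEq V] {θ : V → Option Bool} {Z v : V} {b : Bool} :
    combine θ (single Z true) v = some b ↔ θ v = some b ∨ (θ v = none ∧ v = Z ∧ b = true) := by
  unfold combine single
  cases θ v <;> by_cases hv : v = Z <;> simp [hv, eq_comm]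

theorem isUnit_iff [DecidableEq V] {X : V} {Φ : (V → Bool) → Bool} :
    IsUnit X Φ ↔ TermImplies (single X true) Φ ∧ ¬ TermImplies (fun _ => none) Φ := by
  refine ⟨fun ⟨h, hprime⟩ => ⟨h, hprime _ (fun _ _ h => nomatch h) fun he => ?_⟩,
    fun ⟨h, h0⟩ => ⟨h, fun τ' hsub hne hτ' => ?_⟩⟩
  · simpa [single] using congrFun he X
  have hsub' : ∀ v b, τ' v = some b → v = X ∧ b = true := fun v b hv => by
    simpa [single, eq_comm] using hsub v b hv
  by_cases hX : τ' X = some true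
  · refine hne (funext fun v => ?_)
    by_cases hv : v = X
    · simp [single, hv, hX]
    · cases h' : τ' v with
      | none => simp [single, hv]
      | some b => exact absurd (hsub' v b h').1 hv
  · have : τ' = fun _ => none := funext fun v => by
      cases h' : τ' v with
      | none => rfl
      | some b =>
        obtain ⟨rfl, rfl⟩ := hsub' v b h'
        exact absurd h' hX
    exact h0 (this ▸ hτ')

theorem isPrimeImplicant_pair_iff [DecidableEq V] {x y : V} (hxy : x ≠ y)
    {Φ : (V → Bool) → Bool} :
    IsPrimeImplicant (fun v => if v = x ∨ v = y then some true else none) Φ ↔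
      TermImplies (fun v => if v = x ∨ v = y then some true else none) Φ ∧
        ¬ TermImplies (single x true) Φ ∧ ¬ TermImplies (single y true) Φ := by
  set π : V → Option Bool := fun v => if v = x ∨ v = y then some true else none
  have hπ : ∀ v b, π v = some b → (v = x ∨ v = y) ∧ b = true := fun v b h => by
    simp only [π] at h
    split_ifs at h with hv
    exact ⟨hv, (Option.some_injective _ h).symm⟩
  have hsingle : ∀ z, z = x ∨ z = y → Subterm (single z true) π := fun z hz v b h => by
    simp only [single] at h
    split_ifs at h with hv
    subst hv
    simp [π, hz, ← h]
  refine ⟨fun ⟨h, hprime⟩ => ⟨h, hprime _ (hsingle x (.inl rfl)) fun he => ?_,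
    hprime _ (hsingle y (.inr rfl)) fun he => ?_⟩, fun ⟨h, hx, hy⟩ => ⟨h, ?_⟩⟩
  · simpa [single, π, hxy.symm] using congrFun he y
  · simpa [single, π, hxy] using congrFun he x
  intro τ' hsub hne hτ'
  by_cases hxt : τ' x = some true
  · by_cases hyt : τ' y = some true
    · refine hne (funext fun v => ?_)
      by_cases hv : v = x ∨ v = y
      · rcases hv with rfl | rfl <;> simp [π, hxt, hyt]
      · cases h' : τ' v with
        | none => simp [π, hv]
        | some b => exact absurd (hπ v b (hsub v b h')).1 hv
    · refine hx (hτ'.mono fun v b hv => ?_)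
      obtain ⟨hv' | hv', rfl⟩ := hπ v b (hsub v b hv)
      · simp [single, hv']
      · exact absurd (hv' ▸ hv) hyt
  · refine hy (hτ'.mono fun v b hv => ?_)
    obtain ⟨hv' | hv', rfl⟩ := hπ v b (hsub v b hv)
    · exact absurd (hv' ▸ hv) hxt
    · simp [single, hv']

end BF

theorem BoolFunDependsOn.exists_ne {m : ℕ} {f : (Fin m → Bool) → Bool} {l : Fin m}
    (h : BoolFunDependsOn f l) :
    ∃ μ, f (Function.update μ l true) ≠ f (Function.update μ l false) := by
  obtain ⟨μ, h | h⟩ := h <;> exact ⟨μ, by simp [h]⟩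

theorem BoolFunDependsOn.false_of_absorbs {m : ℕ} {f : (Fin m → Bool) → Bool} {l : Fin m}
    (hf : BoolFunDependsOn f l) (D : Fin m → Prop) (hD : D l)
    (habs : ∀ c c' : Fin m → Bool, (∀ l', c' l' = true ↔ c l' = true ∨ D l') → f c' = f c) :
    False := by
  classical
  obtain ⟨μ, hμ⟩ := hf.exists_ne
  set c' : Fin m → Bool := fun l' => decide (Function.update μ l false l' = true ∨ D l')
  refine hμ ((habs _ c' fun l' => ?_).symm.trans (habs _ c' fun l' => ?_))
  · by_cases hl : l' = l
    · subst hl; simp [c', hD]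
    · simp [c', hl]
  · simp [c']

theorem Finset.exists_mem_update_iff {α β : Type*} [DecidableEq α] {T : Finset α} {t : α}
    (ht : t ∈ T) (X : α → β) (s : β) (P : α → β → Prop) :
    (∃ p ∈ T, P p (Function.update X t s p)) ↔ (∃ p ∈ T.erase t, P p (X p)) ∨ P t s := by
  constructor
  · rintro ⟨p, hp, h⟩
    by_cases hpt : p = t
    · subst hpt
      exact .inr (by simpa using h)
    · exact .inl ⟨p, Finset.mem_erase.2 ⟨hpt, hp⟩, by simpa [hpt] using h⟩
  · rintro (⟨p, hp, h⟩ | h)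
    · exact ⟨p, Finset.mem_of_mem_erase hp, by simpa [Finset.ne_of_mem_erase hp] using h⟩
    · exact ⟨t, ht, by simpa using h⟩

namespace HVar

variable {n k : ℕ}

/-- Position on the chain `R(i), S_1(i,j), …, S_k(i,j), T(j)` of `(i,j)`, along which
`P_{ℓ,i,j}` consists of the variables at positions `ℓ` and `ℓ + 1`. -/
def pos : HVar n k → ℕ
  | .R _ => 0
  | .S m _ _ => m + 1
  | .T _ => k + 1

def OnChain (p : Fin n × Fin n) : HVar n k → Prop
  | .R i => i = p.1
  | .S _ i j => (i, j) = p
  | .T j => j = p.2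

theorem pos_le (v : HVar n k) : v.pos ≤ k + 1 := by
  cases v with
  | R => exact Nat.zero_le _
  | S m => exact Nat.succ_le_succ m.isLt.le
  | T => exact le_rfl

theorem eq_of_onChain_of_pos_eq {p : Fin n × Fin n} {v w : HVar n k} (hv : v.OnChain p)
    (hw : w.OnChain p) (h : v.pos = w.pos) : v = w := by
  cases v <;> cases w <;> simp only [OnChain, pos] at hv hw h <;> subst_vars <;> grind

end HVar

section ChainVars

variable {n k : ℕ}

theorem leftVar_zero (i j : Fin n) : leftVar n k 0 i j = .R i := by
  simp [leftVar]

theorem rightVar_last (i j : Fin n) : rightVar n k (Fin.last k) i j = .T j := by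
  simp [rightVar]

theorem rightVar_zero (hk : 1 ≤ k) (i j : Fin n) : rightVar n k 0 i j = .S ⟨0, hk⟩ i j := by
  simp [rightVar, Nat.pos_iff_ne_zero.1 hk, eq_comm]

theorem leftVar_last (hk : 1 ≤ k) (i j : Fin n) :
    leftVar n k (Fin.last k) i j = .S ⟨k - 1, by omega⟩ i j := by
  simp [leftVar, Nat.pos_iff_ne_zero.1 hk]

theorem pos_leftVar (l : Fin (k + 1)) (i j : Fin n) : (leftVar n k l i j).pos = l := by
  unfold leftVar
  split_ifs with h
  · exact h.symm
  · simp only [HVar.pos]; omega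

theorem pos_rightVar (l : Fin (k + 1)) (i j : Fin n) : (rightVar n k l i j).pos = l + 1 := by
  unfold rightVar
  split_ifs with h <;> simp [HVar.pos, h]

theorem onChain_leftVar (l : Fin (k + 1)) (i j : Fin n) : (leftVar n k l i j).OnChain (i, j) := by
  unfold leftVar
  split_ifs <;> rfl

theorem onChain_rightVar (l : Fin (k + 1)) (i j : Fin n) :
    (rightVar n k l i j).OnChain (i, j) := by
  unfold rightVar
  split_ifs <;> rfl

theorem HVar.OnChain.of_leftVar {l : Fin (k + 1)} {i j : Fin n} {q : Fin n × Fin n}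
    (h : (leftVar n k l i j).OnChain q) : (l = 0 ∧ q.1 = i) ∨ q = (i, j) := by
  unfold leftVar at h
  split_ifs at h with hl
  · exact .inl ⟨Fin.ext hl, h.symm⟩
  · exact .inr h.symm

theorem HVar.OnChain.of_rightVar {l : Fin (k + 1)} {i j : Fin n} {q : Fin n × Fin n}
    (h : (rightVar n k l i j).OnChain q) : (l = Fin.last k ∧ q.2 = j) ∨ q = (i, j) := by
  unfold rightVar at h
  split_ifs at h with hl
  · exact .inl ⟨Fin.ext hl, h.symm⟩
  · exact .inr h.symm

theorem leftVar_ne_rightVar (l : Fin (k + 1)) (i j i' j' : Fin n) :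
    leftVar n k l i j ≠ rightVar n k l i' j' := fun h => by
  have := pos_leftVar l i j ▸ pos_rightVar l i' j' ▸ congrArg HVar.pos h
  omega

theorem not_indepPairs_of_onChain_leftVar_rightVar (hk : 1 ≤ k) {l : Fin (k + 1)}
    {i j : Fin n} {p q : Fin n × Fin n} (hp : (leftVar n k l i j).OnChain p)
    (hq : (rightVar n k l i j).OnChain q) : ¬ IndepPairs p q := by
  rcases hp.of_leftVar with ⟨rfl, hp1⟩ | rfl <;> rcases hq.of_rightVar with ⟨hl, hq1⟩ | rfl
  · exact absurd (congrArg Fin.val hl) (by rw [Fin.val_zero, Fin.val_last]; omega)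
  · exact fun h => h.1 hp1
  · exact fun h => h.2 hq1.symm
  · exact fun h => h.1 rfl

theorem HVar.OnChain.exists_eq {v : HVar n k} {p : Fin n × Fin n} (h : v.OnChain p) :
    ∃ l, v = leftVar n k l p.1 p.2 ∨ v = rightVar n k l p.1 p.2 := by
  cases v with
  | R i => exact ⟨0, .inl (by rw [leftVar_zero, show i = p.1 from h])⟩
  | S m i j =>
    refine ⟨⟨m + 1, by omega⟩, .inl ?_⟩
    obtain rfl : (i, j) = p := h
    simp [leftVar]
  | T j => exact ⟨Fin.last k, .inr (by rw [rightVar_last, show j = p.2 from h])⟩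

end ChainVars

namespace Hk

open BF

variable {n k : ℕ}

def Satisfies (σ : HVar n k → Option Bool) (l : Fin (k + 1)) : Prop :=
  ∃ i j, σ (leftVar n k l i j) = some true ∧ σ (rightVar n k l i j) = some true

def MakesRUnit (σ : HVar n k → Option Bool) (i : Fin n) : Prop :=
  ∃ j, σ (rightVar n k 0 i j) = some true

def MakesTUnit (σ : HVar n k → Option Bool) (j : Fin n) : Prop :=
  ∃ i, σ (leftVar n k (Fin.last k) i j) = some true

def ChainFree (σ : HVar n k → Option Bool) (p : Fin n × Fin n) : Prop :=
  ∀ v : HVar n k, v.OnChain p → σ v = none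

theorem monotone_Hfun (l : Fin (k + 1)) : Monotone (Hfun n k l) := by
  intro a b hab
  simp only [Hfun, Pfun, Bool.and_eq_true, Bool.le_iff_imp, decide_eq_true_eq]
  exact fun ⟨i, j, h1, h2⟩ => ⟨i, j, Bool.le_iff_imp.1 (hab _) h1, Bool.le_iff_imp.1 (hab _) h2⟩

theorem restrict_Hfun_eq_true {σ : HVar n k → Option Bool} {a : HVar n k → Bool}
    {l : Fin (k + 1)} :
    restrict (Hfun n k l) σ a = true ↔ ∃ i j,
      (σ (leftVar n k l i j) = some true ∨
        σ (leftVar n k l i j) = none ∧ a (leftVar n k l i j) = true) ∧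
      (σ (rightVar n k l i j) = some true ∨
        σ (rightVar n k l i j) = none ∧ a (rightVar n k l i j) = true) := by
  simp only [restrict, Hfun, Pfun, decide_eq_true_eq, Bool.and_eq_true, Option.getD_eq_iff]

theorem satisfies_iff_termImplies {σ : HVar n k → Option Bool} {l : Fin (k + 1)} :
    Satisfies σ l ↔ TermImplies (fun _ => none) (restrict (Hfun n k l) σ) := by
  rw [termImplies_iff_of_monotone (monotone_restrict (monotone_Hfun l) σ) (by simp),
    restrict_Hfun_eq_true]
  simp [Satisfies]

theorem satisfies_combine_single_iff {θ : HVar n k → Option Bool} {Z : HVar n k}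
    {l : Fin (k + 1)} :
    Satisfies (combine θ (single Z true)) l ↔
      TermImplies (single Z true) (restrict (Hfun n k l) θ) := by
  rw [satisfies_iff_termImplies, ← restrict_restrict, termImplies_none_restrict_iff]

theorem isPrimeImplicant_Pterm_iff {σ : HVar n k → Option Bool} {l : Fin (k + 1)}
    {i j : Fin n} :
    IsPrimeImplicant (Pterm n k l i j) (restrict (Hfun n k l) σ) ↔
      restrict (Hfun n k l) σ
          (fun v => decide (v = leftVar n k l i j ∨ v = rightVar n k l i j)) = true ∧
        restrict (Hfun n k l) σ (fun v => decide (v = leftVar n k l i j)) ≠ true ∧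
        restrict (Hfun n k l) σ (fun v => decide (v = rightVar n k l i j)) ≠ true := by
  have hmono := monotone_restrict (monotone_Hfun l) σ
  have hsingle : ∀ X : HVar n k, ∀ v b, single X true v = some b → b = true := fun X v b h => by
    simp only [single] at h
    split_ifs at h
    exact (Option.some_inj.1 h).symm
  unfold Pterm
  rw [isPrimeImplicant_pair_iff (leftVar_ne_rightVar l i j i j),
    termImplies_iff_of_monotone hmono fun v b h => by
      split_ifs at h
      exact (Option.some_inj.1 h).symm,
    termImplies_iff_of_monotone hmono (hsingle _), termImplies_iff_of_monotone hmono (hsingle _)]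
  simp [single]

theorem chainFree_of_transversal {σ : HVar n k → Option Bool} {p : Fin n × Fin n}
    (h : Transversal n k σ p) : ChainFree σ p := by
  have hlr : ∀ l, σ (leftVar n k l p.1 p.2) = none ∧ σ (rightVar n k l p.1 p.2) = none := by
    intro l
    obtain ⟨hlr, hl, hr⟩ := isPrimeImplicant_Pterm_iff.1 (h l)
    -- a variable fixed by `σ` can be dropped from the implicant `P_{ℓ,p}`
    refine ⟨by_contra fun hσ => hr ?_, by_contra fun hσ => hl ?_⟩ <;>
      refine (restrict_congr fun v hv => ?_).trans hlr
    · have : v ≠ leftVar n k l p.1 p.2 := fun e => hσ (e ▸ hv)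
      simp [this]
    · have : v ≠ rightVar n k l p.1 p.2 := fun e => hσ (e ▸ hv)
      simp [this]
  intro v hv
  obtain ⟨l, rfl | rfl⟩ := hv.exists_eq
  exacts [(hlr l).1, (hlr l).2]

theorem transversal_iff {σ : HVar n k → Option Bool} {p : Fin n × Fin n} :
    Transversal n k σ p ↔
      (∀ l, ¬ Satisfies σ l) ∧ ChainFree σ p ∧ ¬ MakesRUnit σ p.1 ∧ ¬ MakesTUnit σ p.2 := by
  refine ⟨fun h => ?_, fun ⟨hnoc, hfree, hR, hT⟩ l => ?_⟩
  · have hfree := chainFree_of_transversal h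
    obtain ⟨i, j⟩ := p
    simp only [Transversal, isPrimeImplicant_Pterm_iff] at h
    refine ⟨fun l hs => (h l).2.1 (satisfies_iff_termImplies.1 hs _ (by simp)), hfree,
      fun ⟨j', hj'⟩ => (h 0).2.1 ?_, fun ⟨i', hi'⟩ => (h (Fin.last k)).2.2 ?_⟩
    · refine restrict_Hfun_eq_true.2 ⟨i, j', .inr ⟨?_, ?_⟩, .inl hj'⟩
      · simpa [leftVar_zero] using hfree _ (onChain_leftVar 0 i j)
      · simp [leftVar_zero]
    · refine restrict_Hfun_eq_true.2 ⟨i', j, .inl hi', .inr ⟨?_, ?_⟩⟩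
      · simpa [rightVar_last] using hfree _ (onChain_rightVar (Fin.last k) i j)
      · simp [rightVar_last]
  obtain ⟨i, j⟩ := p
  refine isPrimeImplicant_Pterm_iff.2
    ⟨restrict_Hfun_eq_true.2 ⟨i, j, ?_, ?_⟩, fun h => ?_, fun h => ?_⟩
  · simp [hfree _ (onChain_leftVar l i j)]
  · simp [hfree _ (onChain_rightVar l i j)]
  · obtain ⟨i', j', hl, hr⟩ := restrict_Hfun_eq_true.1 h
    simp only [decide_eq_true_eq] at hl hr
    replace hr := hr.resolve_right fun h => leftVar_ne_rightVar _ _ _ _ _ h.2.symm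
    rcases hl with hl | ⟨-, hl⟩
    · exact hnoc l ⟨i', j', hl, hr⟩
    · rcases (hl ▸ onChain_leftVar l i j).of_leftVar with ⟨rfl, rfl⟩ | h
      · exact hR ⟨j', hr⟩
      · obtain ⟨rfl, rfl⟩ := Prod.ext_iff.1 h
        simp [hfree _ (onChain_rightVar l _ _)] at hr
  · obtain ⟨i', j', hl, hr⟩ := restrict_Hfun_eq_true.1 h
    simp only [decide_eq_true_eq] at hl hr
    replace hl := hl.resolve_right fun h => leftVar_ne_rightVar _ _ _ _ _ h.2
    rcases hr with hr | ⟨-, hr⟩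
    · exact hnoc l ⟨i', j', hl, hr⟩
    · rcases (hr ▸ onChain_rightVar l i j).of_rightVar with ⟨rfl, rfl⟩ | h
      · exact hT ⟨i', hl⟩
      · obtain ⟨rfl, rfl⟩ := Prod.ext_iff.1 h
        simp [hfree _ (onChain_leftVar l _ _)] at hl

open Classical in
noncomputable def chainAssign (F : Finset (Fin n × Fin n)) (X : Fin n × Fin n → Set ℕ)
    (v : HVar n k) : Bool :=
  decide (∃ p ∈ F, v.OnChain p ∧ v.pos ∈ X p)

theorem chainAssign_eq_true {F : Finset (Fin n × Fin n)} {X : Fin n × Fin n → Set ℕ}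
    {v : HVar n k} : chainAssign F X v = true ↔ ∃ p ∈ F, v.OnChain p ∧ v.pos ∈ X p := by
  simp [chainAssign]

theorem chainAssign_update_congr {F : Finset (Fin n × Fin n)} {X : Fin n × Fin n → Set ℕ}
    {t : Fin n × Fin n} {s s' : Set ℕ} {w : HVar n k} (h : w.OnChain t → (w.pos ∈ s ↔ w.pos ∈ s')) :
    chainAssign F (Function.update X t s) w = chainAssign F (Function.update X t s') w := by
  rw [Bool.eq_iff_iff, chainAssign_eq_true, chainAssign_eq_true]
  refine exists_congr fun p => and_congr_right fun _ => and_congr_right fun hwp => ?_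
  by_cases hpt : p = t
  · subst hpt
    simpa using h hwp
  · simp [hpt]

theorem restrict_Hfun_chainAssign (hk : 1 ≤ k) {σ : HVar n k → Option Bool}
    {F : Finset (Fin n × Fin n)} (hF : (F : Set (Fin n × Fin n)).Pairwise IndepPairs)
    (hfree : ∀ p ∈ F, ChainFree σ p) (X : Fin n × Fin n → Set ℕ) (l : Fin (k + 1)) :
    restrict (Hfun n k l) σ (chainAssign F X) = true ↔
      Satisfies σ l ∨ (l = 0 ∧ ∃ p ∈ F, 0 ∈ X p ∧ MakesRUnit σ p.1) ∨
        (l = Fin.last k ∧ ∃ p ∈ F, k + 1 ∈ X p ∧ MakesTUnit σ p.2) ∨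
        ∃ p ∈ F, (l : ℕ) ∈ X p ∧ (l : ℕ) + 1 ∈ X p := by
  simp only [restrict_Hfun_eq_true, chainAssign_eq_true, pos_leftVar, pos_rightVar]
  constructor
  · rintro ⟨i, j, hl | ⟨-, p, hp, hlp, hlX⟩, hr | ⟨-, q, hq, hrq, hrX⟩⟩
    · exact .inl ⟨i, j, hl, hr⟩
    · rcases hrq.of_rightVar with ⟨rfl, rfl⟩ | rfl
      · exact .inr (.inr (.inl ⟨rfl, q, hq, by simpa using hrX, i, hl⟩))
      · simp [hfree _ hq _ (onChain_leftVar l i j)] at hl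
    · rcases hlp.of_leftVar with ⟨rfl, rfl⟩ | rfl
      · exact .inr (.inl ⟨rfl, p, hp, by simpa using hlX, j, hr⟩)
      · simp [hfree _ hp _ (onChain_rightVar l i j)] at hr
    · obtain rfl := hF.eq hp hq (not_indepPairs_of_onChain_leftVar_rightVar hk hlp hrq)
      exact .inr (.inr (.inr ⟨p, hp, hlX, hrX⟩))
  · rintro (⟨i, j, hl, hr⟩ | ⟨rfl, p, hp, hX, j, hr⟩ | ⟨rfl, p, hp, hX, i, hl⟩ | ⟨p, hp, hl, hr⟩)
    · exact ⟨i, j, .inl hl, .inl hr⟩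
    · refine ⟨p.1, j, .inr ⟨hfree p hp _ ?_, p, hp, ?_, by simpa using hX⟩, .inl hr⟩ <;>
        rw [leftVar_zero] <;> rfl
    · refine ⟨i, p.2, .inl hl, .inr ⟨hfree p hp _ ?_, p, hp, ?_, by simpa using hX⟩⟩ <;>
        rw [rightVar_last] <;> rfl
    · exact ⟨p.1, p.2,
        .inr ⟨hfree p hp _ (onChain_leftVar l _ _), p, hp, onChain_leftVar l _ _, hl⟩,
        .inr ⟨hfree p hp _ (onChain_rightVar l _ _), p, hp, onChain_rightVar l _ _, hr⟩⟩

theorem restrict_Hfun_chainAssign_of_transversal (hk : 1 ≤ k) {σ : HVar n k → Option Bool}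
    {F : Finset (Fin n × Fin n)} (hF : (F : Set (Fin n × Fin n)).Pairwise IndepPairs)
    (htr : ∀ p ∈ F, Transversal n k σ p) (hnoc : ∀ l, ¬ Satisfies σ l)
    (X : Fin n × Fin n → Set ℕ) (l : Fin (k + 1)) :
    restrict (Hfun n k l) σ (chainAssign F X) = true ↔
      ∃ p ∈ F, (l : ℕ) ∈ X p ∧ (l : ℕ) + 1 ∈ X p := by
  rw [restrict_Hfun_chainAssign hk hF (fun p hp => (transversal_iff.1 (htr p hp)).2.1)]
  refine ⟨?_, fun h => .inr (.inr (.inr h))⟩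
  rintro (h | ⟨-, p, hp, -, h⟩ | ⟨-, p, hp, -, h⟩ | h)
  exacts [(hnoc l h).elim, ((transversal_iff.1 (htr p hp)).2.2.1 h).elim,
    ((transversal_iff.1 (htr p hp)).2.2.2 h).elim, h]

/-- The end conditions keep units `R(i)`, `T(j)` of a restriction from changing the values `c`. -/
def Realizes (F : Finset (Fin n × Fin n)) (X : Fin n × Fin n → Set ℕ)
    (c : Fin (k + 1) → Bool) : Prop :=
  (∀ l : Fin (k + 1), (∃ p ∈ F, (l : ℕ) ∈ X p ∧ (l : ℕ) + 1 ∈ X p) ↔ c l = true) ∧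
    (∀ p ∈ F, 0 ∈ X p → c 0 = true) ∧ (∀ p ∈ F, k + 1 ∈ X p → c (Fin.last k) = true)

def RealizesAll (k : ℕ) (F : Finset (Fin n × Fin n)) : Prop :=
  ∀ c : Fin (k + 1) → Bool, ∃ X, Realizes F X c

def edgeChain (E : Set (Fin (k + 1))) : Set ℕ :=
  {m | ∃ l ∈ E, m = l ∨ m = l + 1}

theorem mem_edgeChain_and_succ_iff {E : Set (Fin (k + 1))}
    (hE : ∀ l ∈ E, ∀ l' ∈ E, (l' : ℕ) ≠ l + 2) {l : Fin (k + 1)} :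
    (l : ℕ) ∈ edgeChain E ∧ (l : ℕ) + 1 ∈ edgeChain E ↔ l ∈ E := by
  refine ⟨fun ⟨⟨l₁, h₁, e₁⟩, ⟨l₂, h₂, e₂⟩⟩ => ?_, fun h => ⟨⟨l, h, .inl rfl⟩, ⟨l, h, .inr rfl⟩⟩⟩
  rcases e₁ with e₁ | e₁
  · rwa [Fin.ext e₁]
  rcases e₂ with e₂ | e₂
  · exact absurd (hE l₁ h₁ l₂ h₂) (by omega)
  · rwa [Fin.ext (by omega : (l : ℕ) = l₂)]

theorem realizes_edgeChain {F : Finset (Fin n × Fin n)} {E : Fin n × Fin n → Set (Fin (k + 1))}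
    {c : Fin (k + 1) → Bool} (hsparse : ∀ p ∈ F, ∀ l ∈ E p, ∀ l' ∈ E p, (l' : ℕ) ≠ l + 2)
    (hsound : ∀ p ∈ F, ∀ l ∈ E p, c l = true) (hcover : ∀ l, c l = true → ∃ p ∈ F, l ∈ E p) :
    Realizes F (fun p => edgeChain (E p)) c := by
  refine ⟨fun l => ⟨fun ⟨p, hp, h⟩ => ?_, fun h => ?_⟩, ?_, ?_⟩
  · exact hsound p hp l ((mem_edgeChain_and_succ_iff (hsparse p hp)).1 h)
  · obtain ⟨p, hp, hl⟩ := hcover l h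
    exact ⟨p, hp, (mem_edgeChain_and_succ_iff (hsparse p hp)).2 hl⟩
  · rintro p hp ⟨l, hl, h | h⟩
    · rw [show (0 : Fin (k + 1)) = l from Fin.ext (by rw [Fin.val_zero, h])]
      exact hsound p hp l hl
    · omega
  · rintro p hp ⟨l, hl, h | h⟩
    · omega
    · rw [show Fin.last k = l from Fin.ext (by rw [Fin.val_last]; omega)]
      exact hsound p hp l hl

theorem realizesAll_of_ne {F : Finset (Fin n × Fin n)} {p q : Fin n × Fin n} (hp : p ∈ F) (hq : q ∈ F)
    (hpq : p ≠ q) : RealizesAll k F := by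
  intro c
  -- the true edges go to the two chains alternately in blocks of two, so no chain receives
  -- two edges at distance 2
  refine ⟨_, realizes_edgeChain (E := fun r => {l | c l = true ∧
    (r = p ∧ (l : ℕ) % 4 < 2 ∨ r = q ∧ 2 ≤ (l : ℕ) % 4)}) ?_ (fun _ _ _ hl => hl.1) fun l hl => ?_⟩
  · rintro r - l ⟨-, hl⟩ l' ⟨-, hl'⟩
    rcases hl with ⟨rfl, hl⟩ | ⟨rfl, hl⟩ <;> rcases hl' with ⟨h, hl'⟩ | ⟨h, hl'⟩
    all_goals first | omega | exact absurd h (by tauto)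
  · by_cases h : (l : ℕ) % 4 < 2
    exacts [⟨p, hp, hl, .inl ⟨rfl, h⟩⟩, ⟨q, hq, hl, .inr ⟨rfl, by omega⟩⟩]

theorem realizesAll_of_mem_of_eq_one (hk : k = 1) {F : Finset (Fin n × Fin n)} {p : Fin n × Fin n}
    (hp : p ∈ F) : RealizesAll k F := by
  intro c
  refine ⟨_, realizes_edgeChain (E := fun r => {l | c l = true ∧ r = p}) ?_
    (fun _ _ _ hl => hl.1) fun l hl => ⟨p, hp, hl, rfl⟩⟩
  rintro r - l - l' -
  have := l'.isLt
  omega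

theorem realizesAll_erase {T : Finset (Fin n × Fin n)} (hT : 3 ≤ T.card ∨ (k = 1 ∧ 2 ≤ T.card))
    {t : Fin n × Fin n} (ht : t ∈ T) : RealizesAll k (T.erase t) := by
  rcases hT with hT | ⟨hk, hT⟩
  · obtain ⟨p, hp, q, hq, hpq⟩ := Finset.one_lt_card.1
      (by rw [Finset.card_erase_of_mem ht]; omega : 1 < (T.erase t).card)
    exact realizesAll_of_ne hp hq hpq
  · obtain ⟨p, hp⟩ := Finset.card_pos.1
      (by rw [Finset.card_erase_of_mem ht]; omega : 0 < (T.erase t).card)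
    exact realizesAll_of_mem_of_eq_one hk hp

theorem restrict_Psi (f : (Fin (k + 1) → Bool) → Bool) (σ : HVar n k → Option Bool)
    (a : HVar n k → Bool) :
    restrict (Psi n k f) σ a = f (fun l => restrict (Hfun n k l) σ a) :=
  rfl

theorem restrict_Psi_chainAssign_update (hk : 1 ≤ k) {f : (Fin (k + 1) → Bool) → Bool}
    {σ : HVar n k → Option Bool} {T : Finset (Fin n × Fin n)}
    (hT : (T : Set (Fin n × Fin n)).Pairwise IndepPairs) (htr : ∀ p ∈ T, Transversal n k σ p)
    (hnoc : ∀ l, ¬ Satisfies σ l) {t : Fin n × Fin n} (ht : t ∈ T)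
    {X : Fin n × Fin n → Set ℕ} {c : Fin (k + 1) → Bool} (hX : Realizes (T.erase t) X c)
    (s : Set ℕ) {c' : Fin (k + 1) → Bool}
    (hc' : ∀ l : Fin (k + 1), c' l = true ↔ c l = true ∨ ((l : ℕ) ∈ s ∧ (l : ℕ) + 1 ∈ s)) :
    restrict (Psi n k f) σ (chainAssign T (Function.update X t s)) = f c' := by
  rw [restrict_Psi]
  congr 1
  funext l
  rw [Bool.eq_iff_iff, restrict_Hfun_chainAssign_of_transversal hk hT htr hnoc,
    Finset.exists_mem_update_iff ht _ _ fun _ A => (l : ℕ) ∈ A ∧ (l : ℕ) + 1 ∈ A, hX.1 l, hc']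

theorem chainFree_of_restrict_Psi_eq (hk : 1 ≤ k) {f : (Fin (k + 1) → Bool) → Bool}
    {σ : HVar n k → Option Bool} {T : Finset (Fin n × Fin n)}
    (hT : (T : Set (Fin n × Fin n)).Pairwise IndepPairs) (htr : ∀ p ∈ T, Transversal n k σ p)
    (hnoc : ∀ l, ¬ Satisfies σ l) (hf : ∀ l, BoolFunDependsOn f l)
    {σ'' : HVar n k → Option Bool} (heq : restrict (Psi n k f) σ'' = restrict (Psi n k f) σ)
    {t : Fin n × Fin n} (ht : t ∈ T) (hall : RealizesAll k (T.erase t)) : ChainFree σ'' t := by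
  intro v hv
  by_contra hσv
  -- two assignments differing only at `v` take the same value under `Ψ[σ'']` but are told
  -- apart by `Ψ[σ]`, because `f` depends on its `ℓ`-th argument
  have hpos := v.pos_le
  -- `v` is one of the two variables of `P_{ℓ,t}`
  set l : Fin (k + 1) := ⟨min v.pos k, by omega⟩
  obtain ⟨μ, hμ⟩ := (hf l).exists_ne
  obtain ⟨X, hX⟩ := hall (Function.update μ l false)
  set s : Set ℕ := {(l : ℕ), (l : ℕ) + 1}
  have h₁ : restrict (Psi n k f) σ (chainAssign T (Function.update X t s)) =
      f (Function.update μ l true) := by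
    refine restrict_Psi_chainAssign_update hk hT htr hnoc ht hX s fun l' => ?_
    by_cases hl' : l' = l
    · subst hl'
      simp [s]
    · rw [Function.update_of_ne hl', Function.update_of_ne hl']
      refine iff_self_or.2 fun ⟨h₁, h₂⟩ => absurd (Fin.ext ?_) hl'
      simp only [s, Set.mem_insert_iff, Set.mem_singleton_iff] at h₁ h₂
      omega
  have h₀ : restrict (Psi n k f) σ (chainAssign T (Function.update X t (s \ {v.pos}))) =
      f (Function.update μ l false) := by
    refine restrict_Psi_chainAssign_update hk hT htr hnoc ht hX _ fun l' => ?_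
    refine iff_self_or.2 fun ⟨h₁, h₂⟩ => ?_
    simp only [s, l, Set.mem_sdiff, Set.mem_insert_iff, Set.mem_singleton_iff] at h₁ h₂
    omega
  have hagree : ∀ w, σ'' w = none →
      chainAssign T (Function.update X t s) w =
        chainAssign T (Function.update X t (s \ {v.pos})) w := fun w hw =>
    chainAssign_update_congr fun hwt => by
      simpa using fun _ h => hσv (HVar.eq_of_onChain_of_pos_eq hwt hv h ▸ hw)
  apply hμ
  calc f (Function.update μ l true)
      = restrict (Psi n k f) σ'' (chainAssign T (Function.update X t s)) := by rw [heq, h₁]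
    _ = restrict (Psi n k f) σ'' (chainAssign T (Function.update X t (s \ {v.pos}))) :=
        restrict_congr hagree
    _ = f (Function.update μ l false) := by rw [heq, h₀]

theorem restrict_Psi_absorbs (hk : 1 ≤ k) {f : (Fin (k + 1) → Bool) → Bool}
    {σ σ'' : HVar n k → Option Bool} (heq : restrict (Psi n k f) σ'' = restrict (Psi n k f) σ)
    {T : Finset (Fin n × Fin n)} (hT : (T : Set (Fin n × Fin n)).Pairwise IndepPairs)
    (htr : ∀ p ∈ T, Transversal n k σ p) (hnoc : ∀ l, ¬ Satisfies σ l)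
    (hfree : ∀ p ∈ T, ChainFree σ'' p) {t : Fin n × Fin n} (ht : t ∈ T)
    (hall : RealizesAll k (T.erase t)) (c c' : Fin (k + 1) → Bool)
    (hc' : ∀ l, c' l = true ↔ c l = true ∨ (Satisfies σ'' l ∨ (l = 0 ∧ MakesRUnit σ'' t.1) ∨
      (l = Fin.last k ∧ MakesTUnit σ'' t.2))) :
    f c' = f c := by
  obtain ⟨X, hX⟩ := hall c
  -- only the two ends of the chain of `t` are set: they form no `P_{ℓ,t}` since `k ≥ 1`
  set a := chainAssign T (Function.update X t {0, k + 1})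
  have hσ : restrict (Psi n k f) σ a = f c :=
    restrict_Psi_chainAssign_update hk hT htr hnoc ht hX _ fun l =>
      iff_self_or.2 fun ⟨h₁, h₂⟩ => by
        simp only [Set.mem_insert_iff, Set.mem_singleton_iff] at h₁ h₂
        omega
  have hσ'' : restrict (Psi n k f) σ'' a = f c' := by
    rw [restrict_Psi]
    congr 1
    funext l
    rw [Bool.eq_iff_iff, restrict_Hfun_chainAssign hk hT hfree, hc',
      Finset.exists_mem_update_iff ht _ _ fun p A => 0 ∈ A ∧ MakesRUnit σ'' p.1,
      Finset.exists_mem_update_iff ht _ _ fun p A => k + 1 ∈ A ∧ MakesTUnit σ'' p.2,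
      Finset.exists_mem_update_iff ht _ _ fun _ A => (l : ℕ) ∈ A ∧ (l : ℕ) + 1 ∈ A, hX.1 l]
    constructor
    · rintro (hs | ⟨rfl, ⟨p, hp, h0, -⟩ | ⟨-, hr⟩⟩ | ⟨rfl, ⟨p, hp, hk1, -⟩ | ⟨-, hT'⟩⟩ |
        hc | ⟨h₁, h₂⟩)
      · exact .inr (.inl hs)
      · exact .inl (hX.2.1 p hp h0)
      · exact .inr (.inr (.inl ⟨rfl, hr⟩))
      · exact .inl (hX.2.2 p hp hk1)
      · exact .inr (.inr (.inr ⟨rfl, hT'⟩))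
      · exact .inl hc
      · simp only [Set.mem_insert_iff, Set.mem_singleton_iff] at h₁ h₂
        omega
    · rintro (hc | hs | ⟨rfl, hr⟩ | ⟨rfl, hT'⟩)
      · exact .inr (.inr (.inr (.inl hc)))
      · exact .inl hs
      · exact .inr (.inl ⟨rfl, .inr ⟨by simp, hr⟩⟩)
      · exact .inr (.inr (.inl ⟨rfl, .inr ⟨by simp, hT'⟩⟩))
  rw [← hσ'', heq, hσ]

theorem not_transversalFree (hk : 1 ≤ k) {f : (Fin (k + 1) → Bool) → Bool}
    (hf : ∀ l, BoolFunDependsOn f l) {σ : HVar n k → Option Bool} {T : Finset (Fin n × Fin n)}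
    (hT : (T : Set (Fin n × Fin n)).Pairwise IndepPairs) (htr : ∀ p ∈ T, Transversal n k σ p)
    (hcard : 3 ≤ T.card ∨ (k = 1 ∧ 2 ≤ T.card)) :
    ¬ TransversalFree n k f (restrict (Psi n k f) σ) := by
  rintro ⟨σ'', heq, hno⟩
  obtain ⟨t, ht⟩ := Finset.card_pos.1 (by omega : 0 < T.card)
  have hall : ∀ p ∈ T, RealizesAll k (T.erase p) := fun p hp => realizesAll_erase hcard hp
  have hnoc := (transversal_iff.1 (htr t ht)).1
  have hfree : ∀ p ∈ T, ChainFree σ'' p := fun p hp =>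
    chainFree_of_restrict_Psi_eq hk hT htr hnoc hf heq hp (hall p hp)
  obtain ⟨l, hl⟩ : ∃ l, Satisfies σ'' l ∨ (l = 0 ∧ MakesRUnit σ'' t.1) ∨
      (l = Fin.last k ∧ MakesTUnit σ'' t.2) := by
    by_contra h
    refine hno t (transversal_iff.2 ⟨fun l hs => h ⟨l, .inl hs⟩, hfree t ht,
      fun hr => h ⟨0, .inr (.inl ⟨rfl, hr⟩)⟩, fun hT' => h ⟨_, .inr (.inr ⟨rfl, hT'⟩)⟩⟩)
  exact (hf l).false_of_absorbs _ hl (restrict_Psi_absorbs hk heq hT htr hnoc hfree ht (hall t ht))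

def Touches (Z : HVar n k) (p : Fin n × Fin n) : Prop :=
  Z.OnChain p ∨ (∃ j, Z = rightVar n k 0 p.1 j) ∨ (∃ i, Z = leftVar n k (Fin.last k) i p.2)

theorem transversal_combine_single {θ : HVar n k → Option Bool} {Z : HVar n k}
    (hZ : ∀ l, ¬ IsUnit Z (restrict (Hfun n k l) θ)) {p : Fin n × Fin n}
    (hp : Transversal n k θ p) (hZp : ¬ Touches Z p) :
    Transversal n k (combine θ (single Z true)) p := by
  obtain ⟨hnoc, hfree, hR, hT⟩ := transversal_iff.1 hp
  refine transversal_iff.2 ⟨fun l hs => ?_, fun v hv => ?_, fun ⟨j, hj⟩ => ?_, fun ⟨i, hi⟩ => ?_⟩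
  · exact hZ l (isUnit_iff.2 ⟨satisfies_combine_single_iff.1 hs,
      fun h => hnoc l (satisfies_iff_termImplies.2 h)⟩)
  · exact combine_single_eq_none.2 ⟨hfree v hv, fun e => hZp (.inl (e ▸ hv))⟩
  · rcases combine_single_eq_some.1 hj with h | ⟨-, h, -⟩
    exacts [hR ⟨j, h⟩, hZp (.inr (.inl ⟨j, h.symm⟩))]
  · rcases combine_single_eq_some.1 hi with h | ⟨-, h, -⟩
    exacts [hT ⟨i, h⟩, hZp (.inr (.inr ⟨i, h.symm⟩))]

theorem card_filter_fst_eq_le_one {S : Finset (Fin n × Fin n)}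
    (hS : (S : Set (Fin n × Fin n)).Pairwise IndepPairs) (i : Fin n) :
    (S.filter (·.1 = i)).card ≤ 1 :=
  Finset.card_le_one.2 fun _ ha _ hb => hS.eq (Finset.mem_filter.1 ha).1
    (Finset.mem_filter.1 hb).1 fun h => h.1 ((Finset.mem_filter.1 ha).2.trans
      (Finset.mem_filter.1 hb).2.symm)

theorem card_filter_snd_eq_le_one {S : Finset (Fin n × Fin n)}
    (hS : (S : Set (Fin n × Fin n)).Pairwise IndepPairs) (j : Fin n) :
    (S.filter (·.2 = j)).card ≤ 1 :=
  Finset.card_le_one.2 fun _ ha _ hb => hS.eq (Finset.mem_filter.1 ha).1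
    (Finset.mem_filter.1 hb).1 fun h => h.2 ((Finset.mem_filter.1 ha).2.trans
      (Finset.mem_filter.1 hb).2.symm)

open Classical in
theorem card_filter_touches_le (hk : 1 ≤ k) {S : Finset (Fin n × Fin n)}
    (hS : (S : Set (Fin n × Fin n)).Pairwise IndepPairs) (Z : HVar n k) :
    (S.filter (Touches Z)).card ≤ 1 ∨ (k = 1 ∧ (S.filter (Touches Z)).card ≤ 2) := by
  have hfst := card_filter_fst_eq_le_one hS
  have hsnd := card_filter_snd_eq_le_one hS
  have hZ : ∀ p, Touches Z p ↔ Z.OnChain p ∨ (∃ j, Z = .S ⟨0, hk⟩ p.1 j) ∨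
      (∃ i, Z = .S ⟨k - 1, by omega⟩ i p.2) := by
    simp [Touches, rightVar_zero hk, leftVar_last hk]
  cases Z with
  | R i₀ =>
    refine .inl ((Finset.card_le_card fun p hp => ?_).trans (hfst i₀))
    simp_all [HVar.OnChain, eq_comm]
  | T j₀ =>
    refine .inl ((Finset.card_le_card fun p hp => ?_).trans (hsnd j₀))
    simp_all [HVar.OnChain, eq_comm]
  | S m i₀ j₀ =>
    by_cases hk1 : k = 1
    · refine .inr ⟨hk1, (Finset.card_le_card fun p hp => ?_).trans
        ((Finset.card_union_le _ _).trans (add_le_add (hfst i₀) (hsnd j₀)))⟩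
      simp only [Finset.mem_union, Finset.mem_filter, hZ, HVar.OnChain, HVar.S.injEq] at hp ⊢
      rcases hp.2 with rfl | ⟨j, -, rfl, -⟩ | ⟨i, -, -, rfl⟩
      exacts [.inl ⟨hp.1, rfl⟩, .inl ⟨hp.1, rfl⟩, .inr ⟨hp.1, rfl⟩]
    · by_cases hm : (m : ℕ) = k - 1
      · refine .inl ((Finset.card_le_card fun p hp => ?_).trans (hsnd j₀))
        simp only [Finset.mem_filter, hZ, HVar.OnChain, HVar.S.injEq] at hp ⊢
        rcases hp.2 with rfl | ⟨j, h, -⟩ | ⟨i, -, -, rfl⟩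
        exacts [⟨hp.1, rfl⟩, absurd (show (m : ℕ) = 0 by rw [h]) (by omega), ⟨hp.1, rfl⟩]
      · refine .inl ((Finset.card_le_card fun p hp => ?_).trans (hfst i₀))
        simp only [Finset.mem_filter, hZ, HVar.OnChain, HVar.S.injEq] at hp ⊢
        rcases hp.2 with rfl | ⟨j, -, rfl, -⟩ | ⟨i, h, -⟩
        exacts [⟨hp.1, rfl⟩, ⟨hp.1, rfl⟩, absurd (congrArg Fin.val h) hm]

theorem exists_transversals_combine_single (hk : 1 ≤ k) {θ : HVar n k → Option Bool}
    {Z : HVar n k} (hZ : ∀ l, ¬ IsUnit Z (restrict (Hfun n k l) θ))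
    {S : Finset (Fin n × Fin n)} (hS : (S : Set (Fin n × Fin n)).Pairwise IndepPairs)
    (htr : ∀ p ∈ S, Transversal n k θ p) (hcard : 4 ≤ S.card) :
    ∃ S' : Finset (Fin n × Fin n), (S' : Set (Fin n × Fin n)).Pairwise IndepPairs ∧
      (∀ p ∈ S', Transversal n k (combine θ (single Z true)) p) ∧
      (3 ≤ S'.card ∨ (k = 1 ∧ 2 ≤ S'.card)) := by
  classical
  refine ⟨S.filter (¬ Touches Z ·), hS.mono (Finset.coe_subset.2 (Finset.filter_subset _ _)),
    fun p hp => transversal_combine_single hZ (htr p (Finset.mem_filter.1 hp).1)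
      (Finset.mem_filter.1 hp).2, ?_⟩
  have := Finset.card_filter_add_card_filter_not (s := S) (Touches Z)
  rcases card_filter_touches_le hk hS Z with h | ⟨hk1, h⟩ <;> omega

end Hk

theorem hk_units_characterization_general (n k : ℕ) (hk : 1 ≤ k)
    (f : (Fin (k+1) → Bool) → Bool) (hf : ∀ l, BoolFunDependsOn f l)
    (θ : HVar n k → Option Bool) (hθ : HasIndepTransversals n k θ 4) :
    ∀ Z : HVar n k,
      IsHkUnit n k f Z (BF.restrict (Psi n k f) θ) ↔
        ∃ l : Fin (k+1), BF.IsUnit Z (BF.restrict (Hfun n k l) θ) := by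
  obtain ⟨S, hcard, htr, hS⟩ := hθ
  intro Z
  rw [IsHkUnit, BF.restrict_restrict]
  constructor
  · rintro ⟨hfree, -⟩
    by_contra! hZ
    obtain ⟨S', hS', htr', hcard'⟩ := Hk.exists_transversals_combine_single hk hZ hS htr hcard
    exact Hk.not_transversalFree hk hf hS' htr' hcard' hfree
  · rintro ⟨l, hl⟩
    have hsat := Hk.satisfies_combine_single_iff.2 (BF.isUnit_iff.1 hl).1
    exact ⟨⟨_, rfl, fun p hp => (Hk.transversal_iff.1 hp).1 l hsat⟩,
      Hk.not_transversalFree hk hf hS htr (.inl (by omega))⟩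

/-- If `f` depends on all of its `k+1` variables,
`Ψ = f(H_{k0},…,H_{kk})`, and `Φ = Ψ[θ]` for a `θ` with at least 4 pairwise
independent transversals, then `U_k(Φ) = ⋃_{ℓ} U(H_{kℓ}[θ])`. -/
theorem hk_units_characterization (n k : ℕ) (hn : 1 ≤ n) (hk : 1 ≤ k)
    (f : (Fin (k+1) → Bool) → Bool) (hf : ∀ l, BoolFunDependsOn f l)
    (θ : HVar n k → Option Bool) (hθ : HasIndepTransversals n k θ 4) :
    ∀ Z : HVar n k,
      IsHkUnit n k f Z (BF.restrict (Psi n k f) θ) ↔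
        ∃ l : Fin (k+1), BF.IsUnit Z (BF.restrict (Hfun n k l) θ) :=
  hk_units_characterization_general n k hk f hf θ hθ
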